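/- arXiv:0909.3797 — 3 statements merged into one kernel-verified Lean document; each statement's English description precedes it below -/
import Mathlib

section
/- Let F be a finite nonempty index set, (Eⱼ)ⱼ∈F real numbers contained in an interval I of length ℓ, (wⱼ)ⱼ∈F positive weights, and μ ∈ I with μ ≠ Eⱼ for all j. If Σ_{j: Eⱼ>μ} wⱼ/(Eⱼ-μ) = Σ_{j: Eⱼ<μ} wⱼ/(μ-Eⱼ), then Σⱼ wⱼ ≤ (ℓ²/2)·Σⱼ wⱼ/(Eⱼ-μ)². -/
/-!
Let `S` be the common value of the two sides of the balance condition. Bounding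
`wⱼ = |Eⱼ - μ| · wⱼ / |Eⱼ - μ|` termwise gives `∑ w ≤ ((B - μ) + (μ - A)) S = ℓ S`, and
bounding `wⱼ / |Eⱼ - μ| = |Eⱼ - μ| · wⱼ / (Eⱼ - μ)²` shows that each side of the balance
condition is at most `ℓ` times its half of `∑ w / (E - μ)²`, so `2 S ≤ ℓ ∑ w / (E - μ)²`.
-/

open Finset

section

variable {ι : Type*}

theorem Finset.sum_le_mul_sum_div {s : Finset ι} {u d : ι → ℝ} {c : ℝ}
    (hu : ∀ j ∈ s, 0 ≤ u j) (hd : ∀ j ∈ s, 0 < d j) (hdc : ∀ j ∈ s, d j ≤ c) :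
    ∑ j ∈ s, u j ≤ c * ∑ j ∈ s, u j / d j := by
  rw [mul_sum]
  refine sum_le_sum fun j hj => ?_
  calc u j = d j * (u j / d j) := (mul_div_cancel₀ _ (hd j hj).ne').symm
    _ ≤ c * (u j / d j) := by
      gcongr
      · exact div_nonneg (hu j hj) (hd j hj).le
      · exact hdc j hj

theorem Finset.sum_div_le_mul_sum_div_sq {s : Finset ι} {u d : ι → ℝ} {c : ℝ}
    (hu : ∀ j ∈ s, 0 ≤ u j) (hd : ∀ j ∈ s, 0 < d j) (hdc : ∀ j ∈ s, d j ≤ c) :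
    ∑ j ∈ s, u j / d j ≤ c * ∑ j ∈ s, u j / d j ^ 2 := by
  simpa only [div_div, ← sq] using
    sum_le_mul_sum_div (fun j hj => div_nonneg (hu j hj) (hd j hj).le) hd hdc

theorem Finset.sum_eq_sum_filter_gt_add_sum_filter_lt (F : Finset ι)
    (E f : ι → ℝ) {μ : ℝ} (hμE : ∀ j ∈ F, E j ≠ μ) :
    ∑ j ∈ F, f j = ∑ j ∈ F.filter (fun j => μ < E j), f j
      + ∑ j ∈ F.filter (fun j => E j < μ), f j := by
  rw [← sum_filter_add_sum_filter_not F (fun j => μ < E j) f]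
  congr 2
  refine filter_congr fun j hj => ?_
  rw [not_lt]
  exact ⟨fun h => h.lt_of_ne (hμE j hj), le_of_lt⟩

end

theorem stmt_4_general {ι : Type*} (F : Finset ι)
    (E w : ι → ℝ) (A B μ : ℝ) (ℓ : ℝ) (hℓ : ℓ = B - A)
    (hE : ∀ j ∈ F, E j ∈ Set.Icc A B)
    (hw : ∀ j ∈ F, 0 < w j)
    (hμ : μ ∈ Set.Icc A B) (hμE : ∀ j ∈ F, E j ≠ μ)
    (heq : ∑ j ∈ F.filter (fun j => μ < E j), w j / (E j - μ)
         = ∑ j ∈ F.filter (fun j => E j < μ), w j / (μ - E j)) :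
    ∑ j ∈ F, w j ≤ (ℓ ^ 2 / 2) * ∑ j ∈ F, w j / (E j - μ) ^ 2 := by
  rw [sum_eq_sum_filter_gt_add_sum_filter_lt F E w hμE,
    sum_eq_sum_filter_gt_add_sum_filter_lt F E _ hμE]
  set P := F.filter (fun j => μ < E j)
  set N := F.filter (fun j => E j < μ)
  set S := ∑ j ∈ P, w j / (E j - μ)
  have hP : ∀ j ∈ P, j ∈ F ∧ 0 < E j - μ := fun j hj => by
    rw [mem_filter] at hj; exact ⟨hj.1, sub_pos.2 hj.2⟩
  have hN : ∀ j ∈ N, j ∈ F ∧ 0 < μ - E j := fun j hj => by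
    rw [mem_filter] at hj; exact ⟨hj.1, sub_pos.2 hj.2⟩
  have hwP : ∑ j ∈ P, w j ≤ (B - μ) * S :=
    sum_le_mul_sum_div (fun j hj => (hw j (hP j hj).1).le) (fun j hj => (hP j hj).2)
      fun j hj => by linarith [(hE j (hP j hj).1).2]
  have hwN : ∑ j ∈ N, w j ≤ (μ - A) * S := heq ▸
    sum_le_mul_sum_div (fun j hj => (hw j (hN j hj).1).le) (fun j hj => (hN j hj).2)
      fun j hj => by linarith [(hE j (hN j hj).1).1]
  have hSP : S ≤ ℓ * ∑ j ∈ P, w j / (E j - μ) ^ 2 :=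
    sum_div_le_mul_sum_div_sq (fun j hj => (hw j (hP j hj).1).le) (fun j hj => (hP j hj).2)
      fun j hj => by linarith [(hE j (hP j hj).1).2, hμ.1]
  have hSN : S ≤ ℓ * ∑ j ∈ N, w j / (E j - μ) ^ 2 := by
    simpa only [heq, sub_sq_comm μ] using sum_div_le_mul_sum_div_sq (c := ℓ)
      (fun j hj => (hw j (hN j hj).1).le) (fun j hj => (hN j hj).2)
      fun j hj => by linarith [(hE j (hN j hj).1).1, hμ.2]
  have hℓ0 : 0 ≤ ℓ := by linarith [hμ.1, hμ.2]
  calc ∑ j ∈ P, w j + ∑ j ∈ N, w j ≤ ℓ * S := by rw [hℓ]; linarith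
    _ ≤ _ := by nlinarith [mul_le_mul_of_nonneg_left (add_le_add hSP hSN) hℓ0]

theorem stmt_4 {ι : Type*} (F : Finset ι) (hF : F.Nonempty)
    (E w : ι → ℝ) (A B μ : ℝ) (ℓ : ℝ) (hℓ : ℓ = B - A)
    (hE : ∀ j ∈ F, E j ∈ Set.Icc A B)
    (hw : ∀ j ∈ F, 0 < w j)
    (hμ : μ ∈ Set.Icc A B) (hμE : ∀ j ∈ F, E j ≠ μ)
    (heq : ∑ j ∈ F.filter (fun j => μ < E j), w j / (E j - μ)
         = ∑ j ∈ F.filter (fun j => E j < μ), w j / (μ - E j)) :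
    ∑ j ∈ F, w j ≤ (ℓ ^ 2 / 2) * ∑ j ∈ F, w j / (E j - μ) ^ 2 :=
  stmt_4_general F E w A B μ ℓ hℓ hE hw hμ hμE heq
end

section
/- Let (Eⱼ) be a nondecreasing unbounded sequence of nonnegative reals and wⱼ ≥ 0 with Σ_{Eⱼ≤t} wⱼ ≤ Ct for all t. Then for fixed μ ∈ ℝ and T > max(1, 2|μ|), Σ_{Eⱼ ≥ T} (1 + Eⱼμ + s(Eⱼ - μ))² wⱼ/(1+Eⱼ²)² ≤ C'·(1+μ²+s²)/T for a constant C' depending only on C. -/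
/-- Abel-summation style bound for the tail sum. -/
lemma aux_abel (C : ℝ) (hC0 : 0 ≤ C) (E w : ℕ → ℝ) (hmono : Monotone E)
    (hw : ∀ j, 0 ≤ w j)
    (hW : ∀ n : ℕ, ∑ j ∈ Finset.range (n + 1), w j ≤ C * E n)
    (m : ℕ) (hm : 0 < E m) :
    ∀ N, m ≤ N →
      ∑ j ∈ Finset.Ico m (N + 1), w j / (E j) ^ 2 ≤
        2 * C / E m - 2 * C / E N + (∑ j ∈ Finset.range (N + 1), w j) / (E N) ^ 2 := by
  intro N hN
  induction N, hN using Nat.le_induction with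
  | base =>
      rw [Finset.Ico_add_one_right_eq_Icc, Finset.Icc_self, Finset.sum_singleton]
      have h1 : w m ≤ ∑ j ∈ Finset.range (m + 1), w j :=
        Finset.single_le_sum (fun j _ => hw j) (Finset.self_mem_range_succ m)
      have h2 : w m / E m ^ 2 ≤ (∑ j ∈ Finset.range (m + 1), w j) / E m ^ 2 := by
        gcongr
      linarith
  | succ N hN ih =>
      have ha : 0 < E N := lt_of_lt_of_le hm (hmono hN)
      have hb : 0 < E (N + 1) := lt_of_lt_of_le ha (hmono (Nat.le_succ N))
      have hab : E N ≤ E (N + 1) := hmono (Nat.le_succ N)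
      set a := E N with ha'
      set b := E (N + 1) with hb'
      set W := ∑ j ∈ Finset.range (N + 1), w j with hWdef
      have hW0 : 0 ≤ W := Finset.sum_nonneg fun j _ => hw j
      have hWa : W ≤ C * a := hW N
      have hsum : ∑ j ∈ Finset.Ico m (N + 1 + 1), w j / E j ^ 2
          = (∑ j ∈ Finset.Ico m (N + 1), w j / E j ^ 2) + w (N + 1) / b ^ 2 := by
        rw [Finset.sum_Ico_succ_top (le_trans hN (Nat.le_succ N))]
      have hrange : ∑ j ∈ Finset.range (N + 1 + 1), w j = W + w (N + 1) := by
        rw [Finset.sum_range_succ]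
      have key : W / a ^ 2 - W / b ^ 2 ≤ 2 * C / a - 2 * C / b := by
        have h1 : W * (b ^ 2 - a ^ 2) ≤ C * a * (b ^ 2 - a ^ 2) := by
          have hba : 0 ≤ b ^ 2 - a ^ 2 := by nlinarith
          exact mul_le_mul_of_nonneg_right hWa hba
        have h2 : C * a * (b ^ 2 - a ^ 2) ≤ 2 * C * (b - a) * (a * b) := by
          nlinarith [mul_nonneg (mul_nonneg hC0 ha.le) (sq_nonneg (b - a))]
        rw [div_sub_div _ _ (by positivity) (by positivity),
          div_sub_div _ _ (ne_of_gt ha) (ne_of_gt hb),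
          div_le_div_iff₀ (by positivity) (by positivity)]
        nlinarith [mul_le_mul_of_nonneg_right (h1.trans h2) (mul_nonneg ha.le hb.le)]
      rw [hsum, hrange]
      have hsplit : (W + w (N + 1)) / b ^ 2 = W / b ^ 2 + w (N + 1) / b ^ 2 := by
        ring
      rw [hsplit]
      linarith

lemma ptwise_aux (s μ T e ww : ℝ) (hw : 0 ≤ ww)
    (hT1 : 1 < T) (hTμ : 2 * |μ| < T) (he : T ≤ e) :
    (1 + e * μ + s * (e - μ)) ^ 2 * ww / (1 + e ^ 2) ^ 2
      ≤ 12 * (1 + μ ^ 2 + s ^ 2) * (ww / e ^ 2) := by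
  have he1 : 1 < e := lt_of_lt_of_le hT1 he
  have he0 : 0 < e := lt_trans one_pos he1
  have habs : |μ| < e / 2 := by
    have : 2 * |μ| < e := lt_of_lt_of_le hTμ he
    linarith
  have hμ1 : -(e / 2) < μ := (abs_lt.mp habs).1
  have hμ2 : μ < e / 2 := (abs_lt.mp habs).2
  have h2 : (e - μ) ^ 2 ≤ 9 / 4 * e ^ 2 := by nlinarith
  have step1 : (1 + e * μ + s * (e - μ)) ^ 2
      ≤ 3 * (1 + (e * μ) ^ 2 + (s * (e - μ)) ^ 2) := by
    nlinarith [sq_nonneg (1 - e * μ), sq_nonneg (1 - s * (e - μ)),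
      sq_nonneg (e * μ - s * (e - μ))]
  have step2 : (s * (e - μ)) ^ 2 ≤ s ^ 2 * (9 / 4 * e ^ 2) := by
    rw [mul_pow]
    exact mul_le_mul_of_nonneg_left h2 (sq_nonneg s)
  have he2 : 1 ≤ e ^ 2 := by nlinarith
  have hnum : (1 + e * μ + s * (e - μ)) ^ 2 ≤ 12 * (1 + μ ^ 2 + s ^ 2) * e ^ 2 := by
    nlinarith [mul_nonneg (sq_nonneg e) (sq_nonneg μ), mul_nonneg (sq_nonneg s) (sq_nonneg e)]
  have hden : e ^ 4 ≤ (1 + e ^ 2) ^ 2 := by nlinarith [sq_nonneg e]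
  have hfrac : (1 + e * μ + s * (e - μ)) ^ 2 / (1 + e ^ 2) ^ 2
      ≤ 12 * (1 + μ ^ 2 + s ^ 2) / e ^ 2 := by
    rw [div_le_div_iff₀ (by positivity) (by positivity)]
    have hA : (1 + e * μ + s * (e - μ)) ^ 2 * e ^ 2
        ≤ (12 * (1 + μ ^ 2 + s ^ 2) * e ^ 2) * e ^ 2 :=
      mul_le_mul_of_nonneg_right hnum (sq_nonneg e)
    have hB : 12 * (1 + μ ^ 2 + s ^ 2) * e ^ 4
        ≤ 12 * (1 + μ ^ 2 + s ^ 2) * (1 + e ^ 2) ^ 2 :=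
      mul_le_mul_of_nonneg_left hden (by positivity)
    have hEq : (12 * (1 + μ ^ 2 + s ^ 2) * e ^ 2) * e ^ 2
        = 12 * (1 + μ ^ 2 + s ^ 2) * e ^ 4 := by ring
    linarith
  calc (1 + e * μ + s * (e - μ)) ^ 2 * ww / (1 + e ^ 2) ^ 2
      = ((1 + e * μ + s * (e - μ)) ^ 2 / (1 + e ^ 2) ^ 2) * ww := by ring
    _ ≤ (12 * (1 + μ ^ 2 + s ^ 2) / e ^ 2) * ww :=
        mul_le_mul_of_nonneg_right hfrac hw
    _ = 12 * (1 + μ ^ 2 + s ^ 2) * (ww / e ^ 2) := by ring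

theorem stmt_13 (C : ℝ) (hC : 0 < C) :
    ∃ C' > 0, ∀ (E w : ℕ → ℝ) (s μ T : ℝ),
      (∀ j, 0 ≤ E j) → Monotone E → (∀ t : ℝ, ∃ j, t < E j) →
      (∀ j, 0 ≤ w j) →
      (∀ n : ℕ, ∑ j ∈ Finset.range (n + 1), w j ≤ C * E n) →
      max 1 (2 * |μ|) < T →
      ∑' j : {j : ℕ // T ≤ E j},
          (1 + E j * μ + s * (E j - μ)) ^ 2 * w j / (1 + (E j) ^ 2) ^ 2
        ≤ C' * (1 + μ ^ 2 + s ^ 2) / T := by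
  refine ⟨36 * C, by positivity, ?_⟩
  intro E w s μ T hE0 hmono hub hw hW hT
  have hT1 : 1 < T := lt_of_le_of_lt (le_max_left _ _) hT
  have hTμ : 2 * |μ| < T := lt_of_le_of_lt (le_max_right _ _) hT
  have hT0 : 0 < T := lt_trans one_pos hT1
  have hM0 : (0:ℝ) < 1 + μ ^ 2 + s ^ 2 := by positivity
  have hC0 : 0 ≤ C := hC.le
  have hex : ∃ j, T ≤ E j := (hub T).imp fun j h => le_of_lt h
  obtain ⟨m, hTm, hmin⟩ : ∃ m, T ≤ E m ∧ ∀ k, T ≤ E k → m ≤ k :=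
    ⟨Nat.find hex, Nat.find_spec hex, fun k hk => Nat.find_min' hex hk⟩
  have hEm : 0 < E m := lt_of_lt_of_le hT0 hTm
  apply tsum_le_of_sum_le'
  · positivity
  intro F
  -- Step 1: pointwise bound
  have ptwise : ∀ x : {j : ℕ // T ≤ E j}, x ∈ F →
      (1 + E x * μ + s * (E x - μ)) ^ 2 * w x / (1 + (E x) ^ 2) ^ 2
        ≤ 12 * (1 + μ ^ 2 + s ^ 2) * (w x / (E x) ^ 2) :=
    fun x _ => ptwise_aux s μ T (E x.1) (w x.1) (hw x.1) hT1 hTμ x.2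
  -- Step 2: tail sum bound
  have tail : ∑ x ∈ F, w x.1 / (E x.1) ^ 2 ≤ 3 * C / T := by
    rcases F.eq_empty_or_nonempty with rfl | hF
    · simp; positivity
    · set G := F.image Subtype.val with hGdef
      have hGne : G.Nonempty := hF.image _
      set N := max m (G.max' hGne) with hNdef
      have hmN : m ≤ N := le_max_left _ _
      have hsub : G ⊆ Finset.Ico m (N + 1) := by
        intro j hj
        rw [Finset.mem_Ico]
        obtain ⟨x, hx, rfl⟩ := Finset.mem_image.mp hj
        refine ⟨hmin _ x.2, ?_⟩
        have : x.1 ≤ G.max' hGne := Finset.le_max' G _ hj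
        omega
      have heq : ∑ x ∈ F, w x.1 / (E x.1) ^ 2 = ∑ j ∈ G, w j / (E j) ^ 2 := by
        rw [hGdef]
        exact (Finset.sum_image (g := (Subtype.val : {j : ℕ // T ≤ E j} → ℕ))
          (f := fun j => w j / (E j) ^ 2) (fun x _ y _ h => Subtype.ext h)).symm
      rw [heq]
      have hstep : ∑ j ∈ G, w j / (E j) ^ 2 ≤ ∑ j ∈ Finset.Ico m (N + 1), w j / (E j) ^ 2 :=
        Finset.sum_le_sum_of_subset_of_nonneg hsub
          (fun j _ _ => div_nonneg (hw j) (sq_nonneg _))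
      have habel := aux_abel C hC0 E w hmono hw hW m hEm N hmN
      have hEN : E m ≤ E N := hmono hmN
      have hEN0 : 0 < E N := lt_of_lt_of_le hEm hEN
      have hTN : T ≤ E N := le_trans hTm hEN
      have h1 : 2 * C / E m ≤ 2 * C / T := by gcongr
      have h3 : (∑ j ∈ Finset.range (N + 1), w j) / (E N) ^ 2 ≤ C / T := by
        rw [div_le_div_iff₀ (by positivity) hT0]
        have hWN : ∑ j ∈ Finset.range (N + 1), w j ≤ C * E N := hW N
        have hWN0 : 0 ≤ ∑ j ∈ Finset.range (N + 1), w j :=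
          Finset.sum_nonneg fun j _ => hw j
        nlinarith
      have h4 : (0:ℝ) ≤ 2 * C / E N := by positivity
      have h5 : 3 * C / T = 2 * C / T + C / T := by ring
      linarith
  calc ∑ x ∈ F, (1 + E x.1 * μ + s * (E x.1 - μ)) ^ 2 * w x.1 / (1 + (E x.1) ^ 2) ^ 2
      ≤ ∑ x ∈ F, 12 * (1 + μ ^ 2 + s ^ 2) * (w x.1 / (E x.1) ^ 2) :=
        Finset.sum_le_sum ptwise
    _ = 12 * (1 + μ ^ 2 + s ^ 2) * ∑ x ∈ F, w x.1 / (E x.1) ^ 2 := by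
        rw [Finset.mul_sum]
    _ ≤ 12 * (1 + μ ^ 2 + s ^ 2) * (3 * C / T) := by
        exact mul_le_mul_of_nonneg_left tail (by positivity)
    _ = 36 * C * (1 + μ ^ 2 + s ^ 2) / T := by ring
end

section
/- Let x, y ∈ (0,1) be badly approximable (∃ C>0 with |nx - r| ≥ C/n and |my - r'| ≥ C/m for all positive integers n, m and integers r, r'). For the rectangle (0,a)×(0,b) with eigenfunctions Φ_{n,m}(u,v) = (2/√(ab))·sin(nπu/a)sin(mπv/b) and eigenvalues E_{n,m} = π²(n²/a² + m²/b²), the point p = (ax, by) satisfies |Φ_{n,m}(p)|² ≥ c/E_{n,m}² for some c > 0 independent of n, m. -/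
/-!
Jordan's inequality gives `|sin (π t)| ≥ 2 ‖t‖`, with `‖t‖` the distance to the nearest integer,
so bad approximability yields `sin² (nπx) ≥ 4 C² / n²` and likewise for `y`. By AM–GM,
`E_{n,m} ≥ 2π² n m / (a b)`, i.e. `1 / (n² m²) ≥ 4π⁴ / (a² b² E²)`, which turns the product of
the two sine bounds into the claimed bound with `c = 256 π⁴ C⁴ / (a³ b³)`.
-/

open Real

theorem two_mul_abs_sub_round_le_abs_sin_pi_mul (t : ℝ) :
    2 * |t - round t| ≤ |sin (π * t)| := by
  have hperiodic : |sin (π * t)| = |sin (π * (t - round t))| := by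
    rw [show π * t = π * (t - round t) + (round t : ℤ) * π by ring, sin_add_int_mul_pi,
      abs_mul, abs_neg_one_zpow, one_mul]
  have hsmall : |π * (t - round t)| ≤ π / 2 := by
    rw [abs_mul, abs_of_pos pi_pos]
    nlinarith [abs_sub_round t, pi_pos]
  calc 2 * |t - round t| = 2 / π * |π * (t - round t)| := by
        rw [abs_mul, abs_of_pos pi_pos]; field_simp
    _ ≤ |sin (π * t)| := hperiodic ▸ mul_abs_le_abs_sin hsmall

theorem sq_le_sin_pi_mul_sq_of_forall_le_abs_sub {t ε : ℝ} (hε : 0 ≤ ε)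
    (hfar : ∀ r : ℤ, ε ≤ |t - r|) : (2 * ε) ^ 2 ≤ sin (π * t) ^ 2 := by
  rw [← sq_abs (sin _)]
  gcongr
  linarith [hfar (round t), two_mul_abs_sub_round_le_abs_sin_pi_mul t]

theorem four_mul_pi_pow_four_mul_sq_mul_sq_le (a b u v : ℝ) :
    4 * π ^ 4 * (u ^ 2 * v ^ 2) / (a ^ 2 * b ^ 2)
      ≤ (π ^ 2 * (u ^ 2 / a ^ 2 + v ^ 2 / b ^ 2)) ^ 2 := by
  calc 4 * π ^ 4 * (u ^ 2 * v ^ 2) / (a ^ 2 * b ^ 2)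
        = (π ^ 2) ^ 2 * (4 * (u ^ 2 / a ^ 2) * (v ^ 2 / b ^ 2)) := by ring
    _ ≤ (π ^ 2) ^ 2 * (u ^ 2 / a ^ 2 + v ^ 2 / b ^ 2) ^ 2 := by
        gcongr; exact four_mul_le_sq_add _ _
    _ = _ := by ring

theorem stmt_16_general (x y : ℝ)
    (C : ℝ) (hC : 0 < C)
    (hbadx : ∀ (n : ℕ), 0 < n → ∀ r : ℤ, C / n ≤ |(n : ℝ) * x - r|)
    (hbady : ∀ (m : ℕ), 0 < m → ∀ r : ℤ, C / m ≤ |(m : ℝ) * y - r|)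
    (a b : ℝ) (ha : 0 < a) (hb : 0 < b) :
    ∃ c > 0, ∀ (n m : ℕ), 0 < n → 0 < m →
      ((2 / Real.sqrt (a * b)) * Real.sin ((n : ℝ) * Real.pi * (a * x) / a)
          * Real.sin ((m : ℝ) * Real.pi * (b * y) / b)) ^ 2
        ≥ c / (Real.pi ^ 2 * ((n : ℝ) ^ 2 / a ^ 2 + (m : ℝ) ^ 2 / b ^ 2)) ^ 2 := by
  refine ⟨256 * π ^ 4 * C ^ 4 / (a ^ 3 * b ^ 3), by positivity, fun n m hn hm => ?_⟩
  have hn' : (0 : ℝ) < n := Nat.cast_pos.mpr hn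
  have hm' : (0 : ℝ) < m := Nat.cast_pos.mpr hm
  have hsinx := sq_le_sin_pi_mul_sq_of_forall_le_abs_sub (by positivity) (hbadx n hn)
  have hsiny := sq_le_sin_pi_mul_sq_of_forall_le_abs_sub (by positivity) (hbady m hm)
  have heigen := four_mul_pi_pow_four_mul_sq_mul_sq_le a b n m
  have hΦ : ((2 / √(a * b)) * sin (n * π * (a * x) / a) * sin (m * π * (b * y) / b)) ^ 2
      = 4 / (a * b) * sin (π * (n * x)) ^ 2 * sin (π * (m * y)) ^ 2 := by
    rw [mul_pow, mul_pow, div_pow, sq_sqrt (by positivity)]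
    field_simp
    ring_nf
  rw [ge_iff_le, hΦ]
  calc 256 * π ^ 4 * C ^ 4 / (a ^ 3 * b ^ 3) / (π ^ 2 * (n ^ 2 / a ^ 2 + m ^ 2 / b ^ 2)) ^ 2
      ≤ 256 * π ^ 4 * C ^ 4 / (a ^ 3 * b ^ 3) / (4 * π ^ 4 * (n ^ 2 * m ^ 2) / (a ^ 2 * b ^ 2)) := by
        gcongr
    _ = 4 / (a * b) * (2 * (C / n)) ^ 2 * (2 * (C / m)) ^ 2 := by
        field_simp; ring
    _ ≤ 4 / (a * b) * sin (π * (n * x)) ^ 2 * sin (π * (m * y)) ^ 2 := by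
        gcongr

theorem stmt_16 (x y : ℝ) (hx : x ∈ Set.Ioo (0 : ℝ) 1) (hy : y ∈ Set.Ioo (0 : ℝ) 1)
    (C : ℝ) (hC : 0 < C)
    (hbadx : ∀ (n : ℕ), 0 < n → ∀ r : ℤ, C / n ≤ |(n : ℝ) * x - r|)
    (hbady : ∀ (m : ℕ), 0 < m → ∀ r : ℤ, C / m ≤ |(m : ℝ) * y - r|)
    (a b : ℝ) (ha : 0 < a) (hb : 0 < b) :
    ∃ c > 0, ∀ (n m : ℕ), 0 < n → 0 < m →
      ((2 / Real.sqrt (a * b)) * Real.sin ((n : ℝ) * Real.pi * (a * x) / a)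
          * Real.sin ((m : ℝ) * Real.pi * (b * y) / b)) ^ 2
        ≥ c / (Real.pi ^ 2 * ((n : ℝ) ^ 2 / a ^ 2 + (m : ℝ) ^ 2 / b ^ 2)) ^ 2 :=
  stmt_16_general x y C hC hbadx hbady a b ha hb
end
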